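/- Let A, B : [t₀,∞) → M_m(ℝ) be continuous, let S : [t₀,∞) → M_m(ℝ) be continuous with S(t) symmetric for all t, let S₀ ∈ M_m(ℝ) be symmetric, and set Λ(t) = 2∫_{t₀}^t S(ν) dν + S₀. If K : [t₀,∞) → M_m(ℝ) is a C¹ solution of the matrix differential equation 2K̇(t) + A(t)K(t) + K(t)A(t)ᵀ + A(t)S(t) − S(t)A(t)ᵀ + B(t)Λ(t) − Λ(t)B(t)ᵀ = 0 whose initial value K(t₀) is skew-symmetric, then K(t) is skew-symmetric for every t ≥ t₀. -/

import Mathlib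

/-!
Set `M = K + Kᵀ`. Transposing the equation and adding it to itself, the terms
`AS − SAᵀ` and `BΛ − ΛBᵀ` cancel because `S` and `Λ` are symmetric, leaving the linear
equation `2Ṁ + AM + MAᵀ = 0`. Hence `‖Ṁ‖ ≤ ‖A‖‖M‖`, and since `M(t₀) = 0` and `A` is bounded
on every `[t₀, t]`, Grönwall's inequality forces `M ≡ 0`.
-/

open Matrix Set intervalIntegral

attribute [local instance] Matrix.frobeniusNormedAddCommGroup Matrix.frobeniusNormedSpace

noncomputable def Lam (t₀ : ℝ) {m : ℕ} (S : ℝ → Matrix (Fin m) (Fin m) ℝ)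
    (S₀ : Matrix (Fin m) (Fin m) ℝ) (t : ℝ) : Matrix (Fin m) (Fin m) ℝ :=
  (2:ℝ) • (∫ ν in t₀..t, S ν) + S₀

section

variable {m n : Type*} [Fintype m] [Fintype n]

theorem Matrix.transpose_intervalIntegral (f : ℝ → Matrix m n ℝ) (a b : ℝ) :
    (∫ ν in a..b, f ν)ᵀ = ∫ ν in a..b, (f ν)ᵀ := by
  let T := (transposeLinearEquiv m n ℝ ℝ).toContinuousLinearEquiv
  simp only [intervalIntegral, transpose_sub]
  congr 1 <;> exact (T.integral_comp_comm f).symm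

theorem HasDerivWithinAt.matrix_transpose {f : ℝ → Matrix m n ℝ} {f' : Matrix m n ℝ}
    {s : Set ℝ} {t : ℝ} (hf : HasDerivWithinAt f f' s t) :
    HasDerivWithinAt (fun x ↦ (f x)ᵀ) f'ᵀ s t :=
  let T := (transposeLinearEquiv m n ℝ ℝ).toContinuousLinearEquiv
  T.hasFDerivAt.comp_hasDerivWithinAt t hf

theorem Matrix.frobenius_norm_mul_add_mul_transpose_le (A M : Matrix n n ℝ) :
    ‖A * M + M * Aᵀ‖ ≤ 2 * (‖A‖ * ‖M‖) :=
  calc ‖A * M + M * Aᵀ‖ ≤ ‖A‖ * ‖M‖ + ‖M‖ * ‖Aᵀ‖ :=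
        (norm_add_le _ _).trans (add_le_add (frobenius_norm_mul _ _) (frobenius_norm_mul _ _))
    _ = 2 * (‖A‖ * ‖M‖) := by rw [frobenius_norm_transpose]; ring

theorem Matrix.two_smul_add_transpose_add_eq_zero {K' K A S L B : Matrix n n ℝ}
    (hS : Sᵀ = S) (hL : Lᵀ = L)
    (h : (2:ℝ) • K' + A * K + K * Aᵀ + A * S - S * Aᵀ + B * L - L * Bᵀ = 0) :
    (2:ℝ) • (K' + K'ᵀ) + (A * (K + Kᵀ) + (K + Kᵀ) * Aᵀ) = 0 := by
  have hT := congrArg transpose h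
  simp only [transpose_add, transpose_sub, transpose_mul, transpose_smul, transpose_zero,
    transpose_transpose, hS, hL] at hT
  rw [← add_zero (0 : Matrix n n ℝ)]
  nth_rw 1 [← h]
  rw [← hT]
  simp only [smul_add, mul_add, add_mul]
  abel

theorem Matrix.norm_le_of_two_smul_add_lyapunov_eq_zero {X A M : Matrix n n ℝ}
    (h : (2:ℝ) • X + (A * M + M * Aᵀ) = 0) : ‖X‖ ≤ ‖A‖ * ‖M‖ := by
  have h2 : 2 * ‖X‖ = ‖A * M + M * Aᵀ‖ := by
    rw [← Real.norm_two, ← norm_smul, eq_neg_of_add_eq_zero_left h, norm_neg]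
  linarith [frobenius_norm_mul_add_mul_transpose_le A M]

end

theorem Lam_transpose {m : ℕ} {t₀ t : ℝ} {S : ℝ → Matrix (Fin m) (Fin m) ℝ}
    {S₀ : Matrix (Fin m) (Fin m) ℝ} (hS : ∀ ν ∈ uIcc t₀ t, (S ν)ᵀ = S ν) (hS₀ : S₀ᵀ = S₀) :
    (Lam t₀ S S₀ t)ᵀ = Lam t₀ S S₀ t := by
  rw [Lam, transpose_add, transpose_smul, transpose_intervalIntegral, hS₀,
    integral_congr hS]

theorem stmt_5_general {m : ℕ} (t₀ : ℝ) (A B S : ℝ → Matrix (Fin m) (Fin m) ℝ)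
    (hA : ContinuousOn A (Ici t₀))
    (hSsymm : ∀ t ∈ Ici t₀, (S t)ᵀ = S t)
    (S₀ : Matrix (Fin m) (Fin m) ℝ) (hS₀ : S₀ᵀ = S₀)
    (K : ℝ → Matrix (Fin m) (Fin m) ℝ) (hK : ContDiffOn ℝ 1 K (Ici t₀))
    (hode : ∀ t ∈ Ici t₀,
      (2:ℝ) • derivWithin K (Ici t₀) t + A t * K t + K t * (A t)ᵀ
        + A t * S t - S t * (A t)ᵀ
        + B t * Lam t₀ S S₀ t - Lam t₀ S S₀ t * (B t)ᵀ = 0)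
    (hK0 : (K t₀)ᵀ = -K t₀) :
    ∀ t ∈ Ici t₀, (K t)ᵀ = -K t := by
  set M := fun t ↦ K t + (K t)ᵀ
  set M' := fun t ↦ derivWithin K (Ici t₀) t + (derivWithin K (Ici t₀) t)ᵀ
  have hM : ∀ t ∈ Ici t₀, HasDerivWithinAt M (M' t) (Ici t₀) t := fun t ht ↦
    have hK' := (hK.differentiableOn one_ne_zero t ht).hasDerivWithinAt
    hK'.add hK'.matrix_transpose
  have hM_ode : ∀ t ∈ Ici t₀, (2:ℝ) • M' t + (A t * M t + M t * (A t)ᵀ) = 0 := fun t ht ↦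
    two_smul_add_transpose_add_eq_zero (hSsymm t ht)
      (Lam_transpose (fun ν hν ↦ hSsymm ν (uIcc_of_le (mem_Ici.1 ht) ▸ hν).1) hS₀) (hode t ht)
  intro t ht
  obtain ⟨C, hC⟩ := isCompact_Icc.exists_bound_of_continuousOn (hA.mono Icc_subset_Ici_self)
  have hMt : M t = 0 := eq_zero_of_abs_deriv_le_mul_abs_self_of_eq_zero_right (K := C)
    (fun x hx ↦ (hM x hx.1).continuousWithinAt.mono Icc_subset_Ici_self)
    (fun x hx ↦ (hM x hx.1).mono (Ici_subset_Ici.2 hx.1)) (by simp [M, hK0])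
    (fun x hx ↦ (norm_le_of_two_smul_add_lyapunov_eq_zero (hM_ode x hx.1)).trans
      (mul_le_mul_of_nonneg_right (hC x (Ico_subset_Icc_self hx)) (norm_nonneg _)))
    t ⟨ht, le_rfl⟩
  exact eq_neg_of_add_eq_zero_right hMt

/-- If `K` is a `C¹` solution on `[t₀,∞)` of
`2K̇ + AK + KAᵀ + AS − SAᵀ + BΛ − ΛBᵀ = 0` whose initial value `K(t₀)` is skew-symmetric,
then `K(t)` is skew-symmetric for all `t ≥ t₀`. -/
theorem stmt_5 {m : ℕ} (t₀ : ℝ) (A B S : ℝ → Matrix (Fin m) (Fin m) ℝ)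
    (hA : ContinuousOn A (Ici t₀)) (hB : ContinuousOn B (Ici t₀))
    (hS : ContinuousOn S (Ici t₀)) (hSsymm : ∀ t ∈ Ici t₀, (S t)ᵀ = S t)
    (S₀ : Matrix (Fin m) (Fin m) ℝ) (hS₀ : S₀ᵀ = S₀)
    (K : ℝ → Matrix (Fin m) (Fin m) ℝ) (hK : ContDiffOn ℝ 1 K (Ici t₀))
    (hode : ∀ t ∈ Ici t₀,
      (2:ℝ) • derivWithin K (Ici t₀) t + A t * K t + K t * (A t)ᵀ
        + A t * S t - S t * (A t)ᵀ
        + B t * Lam t₀ S S₀ t - Lam t₀ S S₀ t * (B t)ᵀ = 0)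
    (hK0 : (K t₀)ᵀ = -K t₀) :
    ∀ t ∈ Ici t₀, (K t)ᵀ = -K t :=
  stmt_5_general t₀ A B S hA hSsymm S₀ hS₀ K hK hode hK0
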